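/- Let G be a finite simple connected graph such that κ_LLY(u,v) ≥ κ > 0 for every edge uv of G. Then for every vertex x and every vertex y with d(x,y) = i ≥ 1, one has |Γ_x^+(y)| + (1/2)·|Γ_x^0(y)| ≤ (1 − iκ/2)·deg(y), where Γ_x^+(y) = {u ∈ N(y) : d(x,u) = d(x,y)+1} and Γ_x^0(y) = {u ∈ N(y) : d(x,u) = d(x,y)}. -/

import Mathlib

open Finset

noncomputable section

/-- The (normalized) graph Laplacian `Δf(x) = (1/deg x) ∑_{y ~ x} (f y - f x)`. -/
def graphLap {V : Type*} [Fintype V] (G : SimpleGraph V) [DecidableRel G.Adj]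
    (f : V → ℝ) (x : V) : ℝ :=
  (G.degree x : ℝ)⁻¹ * ∑ y ∈ G.neighborFinset x, (f y - f x)

/-- `f` is 1-Lipschitz with respect to the graph distance. -/
def IsLip1 {V : Type*} (G : SimpleGraph V) (f : V → ℝ) : Prop :=
  ∀ u v : V, |f u - f v| ≤ G.dist u v

/-- Lin–Lu–Yau curvature of a pair of vertices, via the limit-free
(Münch–Wojciechowski) formulation. -/
def kappaLLY {V : Type*} [Fintype V] (G : SimpleGraph V) [DecidableRel G.Adj]
    (x y : V) : ℝ :=
  sInf { r : ℝ | ∃ f : V → ℝ, IsLip1 G f ∧ f y - f x = G.dist x y ∧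
      r = (graphLap G f x - graphLap G f y) / G.dist x y }

/-- `G` contains a cycle of length `n` as a subgraph: `n` distinct vertices
arranged cyclically so that consecutive ones are adjacent. -/
def HasCycleLen {V : Type*} (G : SimpleGraph V) (n : ℕ) [NeZero n] : Prop :=
  ∃ c : Fin n → V, Function.Injective c ∧ ∀ i : Fin n, G.Adj (c i) (c (i + 1))

/-!
Take `f = d(x, ·)`, which is 1-Lipschitz and increases by exactly one along every edge of a
geodesic from `x` to `y`. Each such edge has curvature at least `κ`, and `f` is an admissible
test function for it, so `Δf` drops by at least `κ` per edge: `iκ ≤ Δf(x) - Δf(y) ≤ 1 - Δf(y)`.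
Since every neighbour `u` of `y` has `f u - f y ≥ -1`, the quantity `|Γ⁺| + |Γ⁰|/2` is at most
`(deg y · Δf(y) + deg y) / 2`, which gives the bound.
-/

section

open SimpleGraph

variable {V : Type*} {G : SimpleGraph V}

theorem SimpleGraph.Connected.isLip1_dist (hconn : G.Connected) (x : V) :
    IsLip1 G fun u => (G.dist x u : ℝ) := by
  intro u v
  have hu : G.dist x u ≤ G.dist u v + G.dist x v := by
    rw [add_comm, dist_comm (u := u)]
    exact hconn.dist_triangle
  have hv : G.dist x v ≤ G.dist u v + G.dist x u := add_comm (G.dist x u) _ ▸ hconn.dist_triangle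
  dsimp only
  rw [abs_sub_le_iff, sub_le_iff_le_add, sub_le_iff_le_add]
  exact ⟨by exact_mod_cast hu, by exact_mod_cast hv⟩

theorem IsLip1.sub_le_one_of_adj {f : V → ℝ} (hf : IsLip1 G f) {u v : V} (h : G.Adj u v) :
    f v - f u ≤ 1 := by
  have := hf v u
  rw [dist_comm, dist_eq_one_iff_adj.mpr h, Nat.cast_one] at this
  exact (abs_le.mp this).2

variable [Fintype V] [DecidableRel G.Adj]

theorem SimpleGraph.degree_mul_graphLap (f : V → ℝ) (x : V) :
    G.degree x * graphLap G f x = ∑ u ∈ G.neighborFinset x, (f u - f x) := by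
  rcases eq_or_ne (G.degree x) 0 with h | h
  · have hN : G.neighborFinset x = ∅ := by
      rw [← card_eq_zero, card_neighborFinset_eq_degree, h]
    simp [h, hN]
  · rw [graphLap, ← mul_assoc, mul_inv_cancel₀ (by exact_mod_cast h), one_mul]

theorem IsLip1.abs_graphLap_le_one {f : V → ℝ} (hf : IsLip1 G f) (x : V) :
    |graphLap G f x| ≤ 1 := by
  rcases Nat.eq_zero_or_pos (G.degree x) with h | h
  · simp [graphLap, h]
  have hdeg : (0 : ℝ) < G.degree x := by exact_mod_cast h
  rw [← mul_le_mul_iff_right₀ hdeg, ← abs_of_pos hdeg, ← abs_mul, degree_mul_graphLap,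
    abs_of_pos hdeg, ← card_neighborFinset_eq_degree, mul_one]
  calc |∑ u ∈ G.neighborFinset x, (f u - f x)|
      ≤ ∑ u ∈ G.neighborFinset x, |f u - f x| := abs_sum_le_sum_abs _ _
    _ ≤ ∑ _u ∈ G.neighborFinset x, (1 : ℝ) := sum_le_sum fun u hu => by
        simpa [dist_comm, dist_eq_one_iff_adj.mpr ((mem_neighborFinset G x u).mp hu)] using
          hf u x
    _ = #(G.neighborFinset x) := by simp

theorem kappaLLY_le {f : V → ℝ} (hf : IsLip1 G f) {a b : V} (hab : f b - f a = G.dist a b) :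
    kappaLLY G a b ≤ (graphLap G f a - graphLap G f b) / G.dist a b := by
  refine csInf_le ⟨-2, ?_⟩ ⟨f, hf, hab, rfl⟩
  rintro r ⟨g, hg, -, rfl⟩
  have ha := abs_le.mp (hg.abs_graphLap_le_one a)
  have hb := abs_le.mp (hg.abs_graphLap_le_one b)
  rcases Nat.eq_zero_or_pos (G.dist a b) with h | h
  · simp [h]
  · have hd : (1 : ℝ) ≤ G.dist a b := by exact_mod_cast h
    rw [le_div_iff₀ (by linarith)]
    nlinarith

/-- A 1-Lipschitz `f` that gains the full length of the walk rises by exactly one on each edge,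
so each edge is a pair for which `f` is admissible in `kappaLLY`. -/
theorem SimpleGraph.Walk.length_mul_le_graphLap_sub {κ : ℝ}
    (hcurv : ∀ u v, G.Adj u v → κ ≤ kappaLLY G u v) {f : V → ℝ} (hf : IsLip1 G f) {a b : V}
    (p : G.Walk a b) (hp : f b - f a = p.length) :
    p.length * κ ≤ graphLap G f a - graphLap G f b := by
  induction p with
  | nil => simp
  | @cons a c b hac q ih =>
    have hstep := hf.sub_le_one_of_adj hac
    have hrest : f b - f c ≤ q.length :=
      (le_abs_self _).trans ((hf b c).trans (by rw [dist_comm]; exact_mod_cast dist_le q))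
    rw [Walk.length_cons, Nat.cast_succ] at hp ⊢
    have hedge : f c - f a = G.dist a c := by
      rw [dist_eq_one_iff_adj.mpr hac, Nat.cast_one]; linarith
    have hκ := (hcurv a c hac).trans (kappaLLY_le hf hedge)
    rw [dist_eq_one_iff_adj.mpr hac, Nat.cast_one, div_one] at hκ
    linarith [ih (by linarith)]

end

theorem Finset.card_filter_succ_add_half_card_filter_le {V : Type*} (s : Finset V) (d : V → ℕ)
    {n : ℕ} (h : ∀ u ∈ s, n ≤ d u + 1) :
    (#(s.filter fun u => d u = n + 1) : ℝ) + 1 / 2 * #(s.filter fun u => d u = n)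
      ≤ (∑ u ∈ s, ((d u : ℝ) - n) + #s) / 2 := by
  rw [natCast_card_filter, natCast_card_filter, mul_sum, ← sum_add_distrib, card_eq_sum_ones,
    Nat.cast_sum, ← sum_add_distrib, sum_div]
  refine sum_le_sum fun u hu => ?_
  have hn : (n : ℝ) ≤ d u + 1 := by exact_mod_cast h u hu
  split_ifs with h₁ h₂ h₂
  · omega
  · rw [h₁]; push_cast; linarith
  · rw [h₂]; linarith
  · linarith

theorem gamma_bound_general_general {V : Type*} [Fintype V] (G : SimpleGraph V)
    [DecidableRel G.Adj] (hconn : G.Connected)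
    (κ : ℝ)
    (hcurv : ∀ u v : V, G.Adj u v → κ ≤ kappaLLY G u v)
    (x y : V) (i : ℕ) (hdist : G.dist x y = i) :
    ((((G.neighborFinset y).filter fun u => G.dist x u = G.dist x y + 1).card : ℝ)
      + (1 / 2) * (((G.neighborFinset y).filter fun u => G.dist x u = G.dist x y).card : ℝ))
      ≤ (1 - i * κ / 2) * G.degree y := by
  set f : V → ℝ := fun u => (G.dist x u : ℝ)
  have hf : IsLip1 G f := hconn.isLip1_dist x
  obtain ⟨p, hp⟩ := hconn.exists_walk_length_eq_dist x y
  have hdrop : i * κ ≤ graphLap G f x - graphLap G f y := by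
    have := p.length_mul_le_graphLap_sub hcurv hf (by simp [f, hp])
    rwa [hp, hdist] at this
  have hx : graphLap G f x ≤ 1 := (abs_le.mp (hf.abs_graphLap_le_one x)).2
  have hy : G.degree y * graphLap G f y ≤ G.degree y * (1 - i * κ) :=
    mul_le_mul_of_nonneg_left (by linarith) (Nat.cast_nonneg _)
  have hnbr : ∀ u ∈ G.neighborFinset y, G.dist x y ≤ G.dist x u + 1 := fun u hu =>
    SimpleGraph.dist_eq_one_iff_adj.mpr ((G.mem_neighborFinset y u).mp hu).symm ▸
      hconn.dist_triangle
  calc _ ≤ (∑ u ∈ G.neighborFinset y, (f u - f y) + #(G.neighborFinset y)) / 2 :=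
        card_filter_succ_add_half_card_filter_le _ _ hnbr
    _ = (G.degree y * graphLap G f y + G.degree y) / 2 := by
        rw [SimpleGraph.degree_mul_graphLap, G.card_neighborFinset_eq_degree]
    _ ≤ _ := by linarith

theorem gamma_bound_general {V : Type*} [Fintype V] (G : SimpleGraph V)
    [DecidableRel G.Adj] (hconn : G.Connected)
    (κ : ℝ) (hκ : 0 < κ)
    (hcurv : ∀ u v : V, G.Adj u v → κ ≤ kappaLLY G u v)
    (x y : V) (i : ℕ) (hi : 1 ≤ i) (hdist : G.dist x y = i) :
    ((((G.neighborFinset y).filter fun u => G.dist x u = G.dist x y + 1).card : ℝ)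
      + (1 / 2) * (((G.neighborFinset y).filter fun u => G.dist x u = G.dist x y).card : ℝ))
      ≤ (1 - i * κ / 2) * G.degree y :=
  gamma_bound_general_general G hconn κ hcurv x y i hdist
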